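/- arXiv:2506.22701 — 2 statements merged into one kernel-verified Lean document; each statement's English description precedes it below -/
import Mathlib

section
/- For every positive integer s and every real δ with 0 < δ < 1, there exists a real polynomial p of degree at most ⌈√(2 s ln(2/δ))⌉ such that |p(x) − x^s| ≤ δ for all x ∈ [−1, 1]. -/
open Finset Polynomial

noncomputable section

/-- Binomial coefficients normalized by `2^s`. -/
def cc (s j : ℕ) : ℝ := (s.choose j : ℝ) / 2 ^ s

lemma cc_nonneg (s j : ℕ) : 0 ≤ cc s j := by unfold cc; positivity

lemma cc_symm (s j : ℕ) (h : j ≤ s) : cc s (s - j) = cc s j := by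
  unfold cc; rw [Nat.choose_symm h]

lemma chebyT_natDegree_le (n : ℕ) : (Polynomial.Chebyshev.T ℝ (n : ℤ)).natDegree ≤ n := by
  induction n using Nat.twoStepInduction with
  | zero => simp [Polynomial.Chebyshev.T_zero]
  | one => simpa [Polynomial.Chebyshev.T_one] using Polynomial.natDegree_X_le
  | more n ih1 ih2 =>
    have h : ((n + 2 : ℕ) : ℤ) = (n : ℤ) + 2 := by push_cast; ring
    rw [h, Polynomial.Chebyshev.T_add_two]
    refine le_trans (Polynomial.natDegree_sub_le _ _) (max_le ?_ (ih1.trans (by omega)))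
    calc (2 * X * Polynomial.Chebyshev.T ℝ ((n:ℤ) + 1)).natDegree
        ≤ (2 * X : ℝ[X]).natDegree + (Polynomial.Chebyshev.T ℝ ((n:ℤ) + 1)).natDegree :=
          Polynomial.natDegree_mul_le
      _ ≤ 1 + (n + 1) := by
          have h1 : (2 * X : ℝ[X]).natDegree ≤ 1 := by
            refine le_trans Polynomial.natDegree_mul_le ?_
            simp
          have h2 : (Polynomial.Chebyshev.T ℝ ((n:ℤ) + 1)).natDegree ≤ n + 1 := by
            have : ((n + 1 : ℕ) : ℤ) = (n : ℤ) + 1 := by push_cast; ring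
            rw [← this]; exact ih2
          omega
      _ ≤ n + 2 := by omega

lemma chebyT_natDegree_le_natAbs (m : ℤ) :
    (Polynomial.Chebyshev.T ℝ m).natDegree ≤ m.natAbs := by
  have h := chebyT_natDegree_le m.natAbs
  rcases le_or_gt 0 m with hm | hm
  · rwa [show ((m.natAbs : ℤ)) = m from by omega] at h
  · rw [show ((m.natAbs : ℤ)) = -m from by omega, Polynomial.Chebyshev.T_neg] at h
    exact h

lemma chebyT_abs_le (m : ℤ) {x : ℝ} (hx : x ∈ Set.Icc (-1 : ℝ) 1) :
    |(Polynomial.Chebyshev.T ℝ m).eval x| ≤ 1 := by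
  obtain ⟨h1, h2⟩ := hx
  rw [← Real.cos_arccos h1 h2, Polynomial.Chebyshev.T_real_cos]
  exact Real.abs_cos_le_one _

lemma cos_pow_eq (s : ℕ) (θ : ℝ) :
    (Real.cos θ) ^ s = ∑ j ∈ range (s + 1), cc s j * Real.cos ((2 * (j : ℝ) - s) * θ) := by
  have h : ((Real.cos θ : ℝ) : ℂ) ^ s = ∑ j ∈ range (s + 1),
      ((cc s j : ℝ) : ℂ) * Complex.exp ((((2 * (j : ℝ) - s) * θ : ℝ)) * Complex.I) := by
    rw [Complex.ofReal_cos]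
    have hc : Complex.cos θ =
        (Complex.exp (θ * Complex.I) + Complex.exp (-θ * Complex.I)) / 2 := by
      rw [eq_div_iff (two_ne_zero), mul_comm, Complex.two_cos]
    rw [hc, div_pow, add_pow, Finset.sum_div]
    refine Finset.sum_congr rfl fun j hj => ?_
    have hj' : j ≤ s := Nat.lt_succ_iff.mp (Finset.mem_range.mp hj)
    rw [← Complex.exp_nat_mul, ← Complex.exp_nat_mul, ← Complex.exp_add,
      show (j : ℂ) * (θ * Complex.I) + ((s - j : ℕ) : ℂ) * (-θ * Complex.I)
          = (((2 * (j : ℝ) - s) * θ : ℝ)) * Complex.I by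
        push_cast [Nat.cast_sub hj']; ring]
    unfold cc
    push_cast
    ring
  have h2 := congrArg Complex.re h
  rw [← Complex.ofReal_pow, Complex.ofReal_re, Complex.re_sum] at h2
  rw [h2]
  refine Finset.sum_congr rfl fun j _ => ?_
  rw [Complex.re_ofReal_mul, Complex.exp_ofReal_mul_I_re]

lemma mgf_eq (s : ℕ) (l : ℝ) :
    ∑ j ∈ range (s + 1), cc s j * Real.exp (l * (2 * (j : ℝ) - s))
      = ((Real.exp l + Real.exp (-l)) / 2) ^ s := by
  rw [div_pow, add_pow, Finset.sum_div]
  refine Finset.sum_congr rfl fun j hj => ?_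
  have hj' : j ≤ s := Nat.lt_succ_iff.mp (Finset.mem_range.mp hj)
  rw [← Real.exp_nat_mul, ← Real.exp_nat_mul, ← Real.exp_add,
    show (j : ℝ) * l + ((s - j : ℕ) : ℝ) * (-l) = l * (2 * (j : ℝ) - s) by
      push_cast [Nat.cast_sub hj']; ring]
  unfold cc
  ring

lemma tail_upper (s : ℕ) (hs : 0 < s) (d : ℕ) :
    ∑ j ∈ (range (s + 1)).filter (fun j : ℕ => (d : ℝ) < 2 * (j : ℝ) - s), cc s j
      ≤ Real.exp (-(d : ℝ) ^ 2 / (2 * s)) := by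
  have hs' : (0 : ℝ) < s := by exact_mod_cast hs
  set l : ℝ := d / s with hl
  have hl0 : 0 ≤ l := by positivity
  calc ∑ j ∈ (range (s + 1)).filter (fun j : ℕ => (d : ℝ) < 2 * (j : ℝ) - s), cc s j
      ≤ ∑ j ∈ (range (s + 1)).filter (fun j : ℕ => (d : ℝ) < 2 * (j : ℝ) - s),
          cc s j * Real.exp (l * (2 * (j : ℝ) - s - d)) := by
        refine Finset.sum_le_sum fun j hj => ?_
        have hj' := (Finset.mem_filter.mp hj).2
        have h1 : (1 : ℝ) ≤ Real.exp (l * (2 * (j : ℝ) - s - d)) := by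
          rw [← Real.exp_zero]
          exact Real.exp_le_exp.mpr (by nlinarith)
        nlinarith [cc_nonneg s j]
    _ ≤ ∑ j ∈ range (s + 1), cc s j * Real.exp (l * (2 * (j : ℝ) - s - d)) := by
        refine Finset.sum_le_sum_of_subset_of_nonneg (Finset.filter_subset _ _)
          fun j _ _ => ?_
        have := cc_nonneg s j
        positivity
    _ = Real.exp (-(l * d)) * ∑ j ∈ range (s + 1), cc s j * Real.exp (l * (2 * (j : ℝ) - s)) := by
        rw [Finset.mul_sum]
        refine Finset.sum_congr rfl fun j _ => ?_
        rw [show l * (2 * (j : ℝ) - s - d) = -(l * d) + l * (2 * (j : ℝ) - s) by ring,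
          Real.exp_add]
        ring
    _ = Real.exp (-(l * d)) * Real.cosh l ^ s := by rw [mgf_eq, Real.cosh_eq]
    _ ≤ Real.exp (-(l * d)) * Real.exp (l ^ 2 / 2) ^ s := by
        have := Real.cosh_le_exp_half_sq l
        gcongr
    _ = Real.exp (-(l * d) + s * (l ^ 2 / 2)) := by
        rw [← Real.exp_nat_mul, ← Real.exp_add]
    _ = Real.exp (-(d : ℝ) ^ 2 / (2 * s)) := by
        congr 1
        rw [hl]
        field_simp
        ring

lemma tail_lower (s : ℕ) (hs : 0 < s) (d : ℕ) :
    ∑ j ∈ (range (s + 1)).filter (fun j : ℕ => 2 * (j : ℝ) - s < -(d : ℝ)), cc s j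
      ≤ Real.exp (-(d : ℝ) ^ 2 / (2 * s)) := by
  have key : ∑ j ∈ (range (s + 1)).filter (fun j : ℕ => 2 * (j : ℝ) - s < -(d : ℝ)), cc s j
      = ∑ j ∈ (range (s + 1)).filter (fun j : ℕ => (d : ℝ) < 2 * (j : ℝ) - s), cc s j := by
    rw [Finset.sum_filter, Finset.sum_filter, ← Finset.sum_range_reflect]
    refine Finset.sum_congr rfl fun j hj => ?_
    have hj' : j ≤ s := Nat.lt_succ_iff.mp (Finset.mem_range.mp hj)
    have hss : s + 1 - 1 - j = s - j := by omega
    rw [hss]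
    have hcast : ((s - j : ℕ) : ℝ) = (s : ℝ) - j := by
      push_cast [Nat.cast_sub hj']; ring
    refine if_congr ?_ (cc_symm s j hj') rfl
    rw [hcast]
    constructor <;> intro h <;> linarith
  rw [key]
  exact tail_upper s hs d

/-- For every positive integer `s` and every real `δ` with `0 < δ < 1`, there exists a real
polynomial `p` of degree at most `⌈√(2 s ln(2/δ))⌉` such that `|p(x) − x^s| ≤ δ`
for all `x ∈ [−1, 1]`. -/
theorem stmt_0 (s : ℕ) (hs : 0 < s) (δ : ℝ) (hδ0 : 0 < δ) (hδ1 : δ < 1) :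
    ∃ p : Polynomial ℝ,
      p.natDegree ≤ ⌈Real.sqrt (2 * s * Real.log (2 / δ))⌉₊ ∧
      ∀ x ∈ Set.Icc (-1 : ℝ) 1, |p.eval x - x ^ s| ≤ δ := by
  classical
  set d := ⌈Real.sqrt (2 * s * Real.log (2 / δ))⌉₊ with hd
  set P : ℕ → Prop := fun j => (2 * (j : ℤ) - s).natAbs ≤ d with hP
  refine ⟨∑ j ∈ (range (s + 1)).filter (fun j => P j),
      Polynomial.C (cc s j) * Polynomial.Chebyshev.T ℝ (2 * (j : ℤ) - s), ?_, ?_⟩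
  · -- degree bound
    refine Polynomial.natDegree_sum_le_of_forall_le _ _ fun j hj => ?_
    have hjP : P j := by simpa using (Finset.mem_filter.mp hj).2
    calc (Polynomial.C (cc s j) * Polynomial.Chebyshev.T ℝ (2 * (j : ℤ) - s)).natDegree
        ≤ (Polynomial.C (cc s j)).natDegree
            + (Polynomial.Chebyshev.T ℝ (2 * (j : ℤ) - s)).natDegree :=
          Polynomial.natDegree_mul_le
      _ ≤ 0 + (2 * (j : ℤ) - s).natAbs := by
          gcongr
          · exact le_of_eq (Polynomial.natDegree_C _)
          · exact chebyT_natDegree_le_natAbs _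
      _ ≤ d := by simpa using hjP
  · intro x hx
    set θ := Real.arccos x with hθ
    have hcos : Real.cos θ = x := Real.cos_arccos hx.1 hx.2
    have heval : (∑ j ∈ (range (s + 1)).filter (fun j => P j),
        Polynomial.C (cc s j) * Polynomial.Chebyshev.T ℝ (2 * (j : ℤ) - s)).eval x
        = ∑ j ∈ (range (s + 1)).filter (fun j => P j),
            cc s j * Real.cos ((2 * (j : ℝ) - s) * θ) := by
      rw [Polynomial.eval_finset_sum]
      refine Finset.sum_congr rfl fun j hj => ?_
      rw [Polynomial.eval_mul, Polynomial.eval_C, ← hcos, Polynomial.Chebyshev.T_real_cos]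
      congr 2
      push_cast
      ring
    have hxs : x ^ s = ∑ j ∈ range (s + 1), cc s j * Real.cos ((2 * (j : ℝ) - s) * θ) := by
      rw [← hcos]; exact cos_pow_eq s θ
    rw [heval, hxs,
      ← Finset.sum_filter_add_sum_filter_not (range (s + 1)) (fun j => P j)
        (fun j => cc s j * Real.cos ((2 * (j : ℝ) - s) * θ))]
    rw [show ∀ a b : ℝ, a - (a + b) = -b from fun a b => by ring, abs_neg]
    -- bound the tail
    have hbound : |∑ j ∈ (range (s + 1)).filter (fun j => ¬ P j),
        cc s j * Real.cos ((2 * (j : ℝ) - s) * θ)|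
        ≤ ∑ j ∈ (range (s + 1)).filter (fun j => ¬ P j), cc s j := by
      refine (Finset.abs_sum_le_sum_abs _ _).trans (Finset.sum_le_sum fun j _ => ?_)
      rw [abs_mul]
      have h1 := Real.abs_cos_le_one ((2 * (j : ℝ) - s) * θ)
      have h2 := cc_nonneg s j
      calc |cc s j| * |Real.cos ((2 * (j : ℝ) - s) * θ)| ≤ |cc s j| * 1 := by
            gcongr
        _ = cc s j := by rw [mul_one, abs_of_nonneg h2]
    refine hbound.trans ?_
    -- split the tail into upper and lower parts
    set A := (range (s + 1)).filter (fun j : ℕ => (d : ℝ) < 2 * (j : ℝ) - s) with hA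
    set B := (range (s + 1)).filter (fun j : ℕ => 2 * (j : ℝ) - s < -(d : ℝ)) with hB
    have hsub : (range (s + 1)).filter (fun j => ¬ P j) ⊆ A ∪ B := by
      intro j hj
      obtain ⟨hjr, hjP⟩ := Finset.mem_filter.mp hj
      rw [hP] at hjP
      simp only [not_le] at hjP
      have : (d : ℤ) < 2 * (j : ℤ) - s ∨ 2 * (j : ℤ) - s < -(d : ℤ) := by omega
      rcases this with h | h
      · refine Finset.mem_union_left _ (Finset.mem_filter.mpr ⟨hjr, ?_⟩)
        have h' : ((d : ℤ) : ℝ) < ((2 * (j : ℤ) - s : ℤ) : ℝ) := by exact_mod_cast h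
        push_cast at h' ⊢
        linarith
      · refine Finset.mem_union_right _ (Finset.mem_filter.mpr ⟨hjr, ?_⟩)
        have h' : ((2 * (j : ℤ) - s : ℤ) : ℝ) < ((-(d : ℤ) : ℤ) : ℝ) := by exact_mod_cast h
        push_cast at h' ⊢
        linarith
    have hdisj : Disjoint A B := by
      rw [hA, hB, Finset.disjoint_left]
      intro j hj1 hj2
      have h1 := (Finset.mem_filter.mp hj1).2
      have h2 := (Finset.mem_filter.mp hj2).2
      have h0 : (0 : ℝ) ≤ (d : ℝ) := Nat.cast_nonneg d
      linarith
    have hsplit : ∑ j ∈ (range (s + 1)).filter (fun j => ¬ P j), cc s j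
        ≤ ∑ j ∈ A, cc s j + ∑ j ∈ B, cc s j := by
      calc ∑ j ∈ (range (s + 1)).filter (fun j => ¬ P j), cc s j
          ≤ ∑ j ∈ A ∪ B, cc s j :=
            Finset.sum_le_sum_of_subset_of_nonneg hsub fun j _ _ => cc_nonneg s j
        _ ≤ ∑ j ∈ A, cc s j + ∑ j ∈ B, cc s j := le_of_eq (Finset.sum_union hdisj)
    refine hsplit.trans ?_
    have hA' := tail_upper s hs d
    have hB' := tail_lower s hs d
    have hfinal : 2 * Real.exp (-(d : ℝ) ^ 2 / (2 * s)) ≤ δ := by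
      have hlog : 0 ≤ Real.log (2 / δ) := Real.log_nonneg (by
        rw [le_div_iff₀ hδ0]; linarith)
      have harg : 0 ≤ 2 * (s : ℝ) * Real.log (2 / δ) := by positivity
      have hs' : (0 : ℝ) < s := by exact_mod_cast hs
      have hdge : Real.sqrt (2 * s * Real.log (2 / δ)) ≤ (d : ℝ) := by
        rw [hd]; exact Nat.le_ceil _
      have hd2 : 2 * (s : ℝ) * Real.log (2 / δ) ≤ (d : ℝ) ^ 2 := by
        calc 2 * (s : ℝ) * Real.log (2 / δ)
            = Real.sqrt (2 * s * Real.log (2 / δ)) ^ 2 := (Real.sq_sqrt harg).symm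
          _ ≤ (d : ℝ) ^ 2 := by
              gcongr

      have hexp : Real.exp (-(d : ℝ) ^ 2 / (2 * s)) ≤ δ / 2 := by
        rw [show (δ / 2 : ℝ) = Real.exp (Real.log (δ / 2)) from
          (Real.exp_log (by positivity)).symm]
        refine Real.exp_le_exp.mpr ?_
        have hlog2 : Real.log (δ / 2) = -Real.log (2 / δ) := by
          rw [← Real.log_inv]
          congr 1
          field_simp
        rw [hlog2, neg_div, neg_le_neg_iff, le_div_iff₀ (by positivity)]
        linarith
      linarith
    calc ∑ j ∈ A, cc s j + ∑ j ∈ B, cc s j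
        ≤ Real.exp (-(d : ℝ) ^ 2 / (2 * s)) + Real.exp (-(d : ℝ) ^ 2 / (2 * s)) := by
          exact add_le_add hA' hB'
      _ = 2 * Real.exp (-(d : ℝ) ^ 2 / (2 * s)) := by ring
      _ ≤ δ := hfinal
end
end

section
/- There exists a constant C > 0 such that for every real κ ≥ 2 and every real δ with 0 < δ < 1/2, there exists a real polynomial p with deg p ≤ C · √κ · ln(κ/δ) such that |p(x) − 1/x| ≤ δ/κ for all real x with 1 ≤ x ≤ κ. -/
open Polynomial Finset

lemma natDegree_T_le : ∀ k : ℕ, (Polynomial.Chebyshev.T ℝ k).natDegree ≤ k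
  | 0 => by simp
  | 1 => by simp
  | (n+2) => by
    have h1 := natDegree_T_le (n+1)
    have h2 := natDegree_T_le n
    have e : ((n+2 : ℕ) : ℤ) = (n : ℤ) + 2 := by push_cast; ring
    have e1 : ((n+1 : ℕ) : ℤ) = (n : ℤ) + 1 := by push_cast; ring
    rw [e, Polynomial.Chebyshev.T_add_two]
    refine (Polynomial.natDegree_sub_le _ _).trans (max_le ?_ ?_)
    · refine (Polynomial.natDegree_mul_le).trans ?_
      have hx : (2 * Polynomial.X : ℝ[X]).natDegree ≤ 1 :=
        Polynomial.natDegree_mul_le.trans (by simp)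
      rw [← e1]
      omega
    · omega

lemma key (ρ θ : ℝ) (h0 : 0 ≤ ρ) (h1 : ρ < 1) (n : ℕ) :
    |(∑ k ∈ Finset.range (n+1), (if k = 0 then (1:ℝ) else 2*(-ρ)^k) * Real.cos (k*θ))
      - (1 - ρ^2)/(1 + ρ^2 + 2*ρ*Real.cos θ)| ≤ (2 / (1 - ρ)) * ρ^(n+1) := by
  set z : ℂ := -(ρ:ℂ) * Complex.exp (θ * Complex.I) with hz
  have habs : ‖z‖ = ρ := by
    rw [hz]
    rw [norm_mul, norm_neg, Complex.norm_real, Complex.norm_exp_ofReal_mul_I,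
      Real.norm_eq_abs, abs_of_nonneg h0, mul_one]
  have hz1 : z ≠ 1 := by
    intro h
    rw [h, norm_one] at habs
    linarith [habs ▸ h1]
  have h1z : (1:ℂ) - z ≠ 0 := fun h => hz1 (by linear_combination -h)
  have hzre : ∀ k : ℕ, (z^k).re = (-ρ)^k * Real.cos (k*θ) := by
    intro k
    have hk : z^k = (((-ρ)^k : ℝ) : ℂ) * Complex.exp ((k*θ : ℝ) * Complex.I) := by
      rw [hz, mul_pow, ← Complex.exp_nat_mul]
      push_cast
      ring_nf
    rw [hk, Complex.re_ofReal_mul, Complex.exp_ofReal_mul_I_re]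
  have hzre0 : z.re = -(ρ * Real.cos θ) := by
    have := hzre 1
    simpa using this
  have hzim : z.im = -(ρ * Real.sin θ) := by
    rw [hz]
    have : (-(ρ:ℂ)) = (((-ρ : ℝ)) : ℂ) := by push_cast; ring
    rw [this, Complex.mul_im]
    simp [Complex.exp_ofReal_mul_I_im, Complex.exp_ofReal_mul_I_re]
  set D := 1 + ρ^2 + 2*ρ*Real.cos θ with hD
  have hDpos : 0 < D := by
    nlinarith [Real.neg_one_le_cos θ, sq_nonneg (1 - ρ)]
  have hns : Complex.normSq (1 - z) = D := by
    rw [Complex.normSq_apply]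
    simp only [Complex.sub_re, Complex.sub_im, Complex.one_re, Complex.one_im, hzre0, hzim]
    nlinarith [Real.sin_sq_add_cos_sq θ]
  have hEre : ((1 - z)⁻¹).re = (1 + ρ * Real.cos θ) / D := by
    rw [Complex.inv_re, hns]
    congr 1
    simp [hzre0]
  -- sum manipulation
  have hsum : (∑ k ∈ Finset.range (n+1), (if k = 0 then (1:ℝ) else 2*(-ρ)^k) * Real.cos (k*θ))
      = 2 * (∑ k ∈ Finset.range (n+1), z^k).re - 1 := by
    have step : ∀ k : ℕ, (if k = 0 then (1:ℝ) else 2*(-ρ)^k) * Real.cos (k*θ)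
        = 2 * (z^k).re - (if k = 0 then 1 else 0) := by
      intro k
      rw [hzre]
      rcases k with _ | k
      · norm_num
      · simp
        ring
    rw [Finset.sum_congr rfl (fun k _ => step k), Finset.sum_sub_distrib,
      Complex.re_sum, Finset.mul_sum]
    congr 1
    rw [Finset.sum_ite_eq' (Finset.range (n+1)) 0 (fun _ => (1:ℝ))]
    simp
  have hgeom : (∑ k ∈ Finset.range (n+1), z^k) - (1-z)⁻¹ = -(z^(n+1)) * (1-z)⁻¹ := by
    have hmul : (∑ k ∈ Finset.range (n+1), z^k) * (z - 1) = z^(n+1) - 1 := geom_sum_mul z (n+1)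
    apply mul_right_cancel₀ h1z
    rw [sub_mul, inv_mul_cancel₀ h1z, mul_assoc, inv_mul_cancel₀ h1z]
    linear_combination -hmul
  have hQ : (1 - ρ^2)/D = 2 * ((1-z)⁻¹).re - 1 := by
    rw [hEre]
    field_simp
    ring
  have key2 : (∑ k ∈ Finset.range (n+1), (if k = 0 then (1:ℝ) else 2*(-ρ)^k) * Real.cos (k*θ))
      - (1 - ρ^2)/D = 2 * ((-(z^(n+1)) * (1-z)⁻¹).re) := by
    rw [hsum, hQ, ← hgeom, Complex.sub_re]
    ring
  rw [key2]
  have habs2 : ‖-(z^(n+1)) * (1-z)⁻¹‖ ≤ ρ^(n+1) / (1 - ρ) := by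
    rw [norm_mul, norm_neg, norm_pow, habs, norm_inv, ← div_eq_mul_inv]
    have hρpos : (0:ℝ) < 1 - ρ := by linarith
    have hlb : 1 - ρ ≤ ‖1 - z‖ := by
      calc 1 - ρ = ‖(1:ℂ)‖ - ‖z‖ := by
            rw [habs, norm_one]
        _ ≤ ‖(1:ℂ) - z‖ := norm_sub_norm_le _ _
    gcongr
  calc |2 * (-(z^(n+1)) * (1-z)⁻¹).re| = 2 * |(-(z^(n+1)) * (1-z)⁻¹).re| := by
        rw [abs_mul]; norm_num
    _ ≤ 2 * ‖-(z^(n+1)) * (1-z)⁻¹‖ := by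
        have := Complex.abs_re_le_norm (-(z^(n+1)) * (1-z)⁻¹)
        linarith
    _ ≤ 2 * (ρ^(n+1) / (1 - ρ)) := by linarith
    _ = (2 / (1 - ρ)) * ρ^(n+1) := by ring

set_option maxHeartbeats 2000000 in
/-- There exists a constant `C > 0` such that for every real `κ ≥ 2` and every real `δ` with
`0 < δ < 1/2`, there exists a real polynomial `p` with `deg p ≤ C · √κ · ln(κ/δ)` such that
`|p(x) − 1/x| ≤ δ/κ` for all real `x` with `1 ≤ x ≤ κ`. -/
theorem stmt_2 :
    ∃ C : ℝ, 0 < C ∧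
      ∀ κ : ℝ, 2 ≤ κ → ∀ δ : ℝ, 0 < δ → δ < 1 / 2 →
        ∃ p : Polynomial ℝ,
          (p.natDegree : ℝ) ≤ C * Real.sqrt κ * Real.log (κ / δ) ∧
          ∀ x : ℝ, 1 ≤ x → x ≤ κ →
            |p.eval x - 1 / x| ≤ δ / κ := by
  refine ⟨3, by norm_num, ?_⟩
  intro κ hκ δ hδ0 hδ
  have hκ0 : (0:ℝ) < κ := by linarith
  set s := Real.sqrt κ with hs
  have hs2 : s^2 = κ := Real.sq_sqrt hκ0.le
  have hs1 : 1 < s := by nlinarith [Real.sqrt_nonneg κ]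
  set ρ := (s-1)/(s+1) with hρ
  have hsp : (0:ℝ) < s + 1 := by linarith
  have hρ0 : 0 ≤ ρ := div_nonneg (by linarith) hsp.le
  have hρ1 : ρ < 1 := by rw [div_lt_one hsp]; linarith
  set M := Real.log (κ/δ) with hM
  set L := Real.log (2*κ/δ) with hL
  have hM1 : 1 ≤ M := by
    have h4 : (4:ℝ) ≤ κ/δ := by
      rw [le_div_iff₀ hδ0]; nlinarith
    have : Real.log 4 ≤ M := by
      rw [hM]; exact Real.log_le_log (by norm_num) h4
    have h42 : Real.log 4 = 2 * Real.log 2 := by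
      rw [show (4:ℝ) = 2^2 by norm_num, Real.log_pow]; push_cast; ring
    nlinarith [Real.log_two_gt_d9]
  have hLM : L ≤ 2 * M := by
    have : L = Real.log 2 + M := by
      rw [hL, hM, show 2*κ/δ = 2 * (κ/δ) by ring,
        Real.log_mul (by norm_num) (by positivity)]
    nlinarith [Real.log_two_lt_d9]
  have hL1 : 1 ≤ L := by
    have : L = Real.log 2 + M := by
      rw [hL, hM, show 2*κ/δ = 2 * (κ/δ) by ring,
        Real.log_mul (by norm_num) (by positivity)]
    nlinarith [Real.log_two_gt_d9]
  set n := ⌈s * L⌉₊ with hn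
  have hnge : s * L ≤ n := Nat.le_ceil _
  have hnle : (n:ℝ) ≤ s*L + 1 := (Nat.ceil_lt_add_one (by positivity)).le
  clear_value n
  have hκ1 : (1:ℝ) < κ := by linarith
  have hc : (0:ℝ) < κ - 1 := by linarith
  set u : ℝ[X] := Polynomial.C (2/(κ-1)) * Polynomial.X + Polynomial.C (-(κ+1)/(κ-1)) with hu
  set p : ℝ[X] := ∑ k ∈ Finset.range (n+1),
      Polynomial.C ((1/s) * (if k = 0 then 1 else 2*(-ρ)^k)) *
        ((Polynomial.Chebyshev.T ℝ k).comp u) with hp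
  clear_value p
  refine ⟨p, ?_, ?_⟩
  · have hdeg : p.natDegree ≤ n := by
      rw [hp]
      apply Polynomial.natDegree_sum_le_of_forall_le
      intro k hk
      refine (Polynomial.natDegree_C_mul_le _ _).trans ?_
      refine (Polynomial.natDegree_comp_le).trans ?_
      have h1 : (Polynomial.Chebyshev.T ℝ k).natDegree ≤ k := natDegree_T_le k
      have h2 : u.natDegree ≤ 1 := by
        rw [hu]
        refine (Polynomial.natDegree_add_le _ _).trans (max_le ?_ ?_)
        · exact (Polynomial.natDegree_C_mul_le _ _).trans (by simp)
        · simp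
      have hk' : k ≤ n := by have := Finset.mem_range.1 hk; omega
      calc (Polynomial.Chebyshev.T ℝ k).natDegree * u.natDegree ≤ k * 1 :=
            Nat.mul_le_mul h1 h2
        _ ≤ n := by omega
    calc (p.natDegree : ℝ) ≤ n := by exact_mod_cast hdeg
      _ ≤ s*L + 1 := hnle
      _ ≤ 3 * s * M := by nlinarith
  · intro x hx1 hxκ
    have hx0 : (0:ℝ) < x := by linarith
    set t := (2*x - (κ+1))/(κ-1) with ht
    have ht1 : -1 ≤ t := by rw [ht, le_div_iff₀ hc]; linarith
    have ht2 : t ≤ 1 := by rw [ht, div_le_one hc]; linarith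
    set θ := Real.arccos t with hθ
    have hcos : Real.cos θ = t := Real.cos_arccos ht1 ht2
    have hux : u.eval x = Real.cos θ := by
      rw [hcos, hu, ht]
      simp only [Polynomial.eval_add, Polynomial.eval_mul, Polynomial.eval_C, Polynomial.eval_X]
      field_simp
      ring
    have hpx : p.eval x = (1/s) * ∑ k ∈ Finset.range (n+1),
        (if k = 0 then (1:ℝ) else 2*(-ρ)^k) * Real.cos (k*θ) := by
      rw [hp, Polynomial.eval_finset_sum, Finset.mul_sum]
      apply Finset.sum_congr rfl
      intro k _
      rw [Polynomial.eval_mul, Polynomial.eval_C, Polynomial.eval_comp, hux]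
      have hT : (Polynomial.Chebyshev.T ℝ (k:ℤ)).eval (Real.cos θ) = Real.cos (k*θ) := by
        have := Polynomial.Chebyshev.T_real_cos θ (k : ℤ)
        rw [this]
        push_cast
        ring_nf
      rw [hT]
      ring
    set D := 1 + ρ^2 + 2*ρ*Real.cos θ with hD
    have hDpos : 0 < D := by
      rw [hD]; nlinarith [Real.neg_one_le_cos θ, sq_nonneg (1 - ρ)]
    have h2x : 2*x = (κ-1)*t + (κ+1) := by
      rw [ht]; field_simp; ring
    have hs0 : (0:ℝ) < s := by linarith
    have h1ρ : 1 - ρ = 2/(s+1) := by rw [hρ]; field_simp; ring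
    have heq : x * (1 - ρ^2) = s * D := by
      rw [hD, hcos]
      have e : ρ * (s+1) = s - 1 := by rw [hρ]; exact div_mul_cancel₀ _ hsp.ne'
      apply mul_right_cancel₀ (pow_ne_zero 2 hsp.ne')
      linear_combination 2*s*h2x - 2*s*(1+t)*hs2 + (-(x+s)*(ρ*(s+1)+s-1) - 2*s*(s+1)*t)*e
    have hval : (1/s) * ((1 - ρ^2)/D) = 1/x := by
      rw [div_mul_div_comm, one_mul, div_eq_div_iff (by positivity) hx0.ne', one_mul, mul_comm]
      linarith [heq]
    have hkey := key ρ θ hρ0 hρ1 n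
    rw [← hD] at hkey
    have h2ρ : 2/(1-ρ) = s + 1 := by
      rw [h1ρ, div_div_eq_mul_div, mul_comm, mul_div_assoc]
      norm_num
    have herr : |p.eval x - 1/x| ≤ 2 * ρ^(n+1) := by
      rw [hpx, ← hval, ← mul_sub, abs_mul, abs_of_pos (by positivity : (0:ℝ) < 1/s)]
      have hstep : (1/s) * |(∑ k ∈ Finset.range (n+1),
          (if k = 0 then (1:ℝ) else 2*(-ρ)^k) * Real.cos (k*θ)) - (1 - ρ^2)/D|
          ≤ (1/s) * ((2/(1-ρ)) * ρ^(n+1)) :=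
        mul_le_mul_of_nonneg_left hkey (by positivity)
      refine hstep.trans ?_
      have hρp : (0:ℝ) ≤ ρ^(n+1) := pow_nonneg hρ0 _
      calc (1/s) * ((2/(1-ρ)) * ρ^(n+1)) = (s+1)/s * ρ^(n+1) := by rw [h2ρ]; ring
        _ ≤ 2 * ρ^(n+1) := by
            have hfrac : (s+1)/s ≤ 2 := by rw [div_le_iff₀ hs0]; linarith
            exact mul_le_mul_of_nonneg_right hfrac hρp
    have hρexp : ρ ≤ Real.exp (-(2/(s+1))) := by
      have he := Real.add_one_le_exp (-(2/(s+1)))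
      have hρeq : ρ = 1 - 2/(s+1) := by linarith [h1ρ]
      linarith
    have hpow : ρ^(n+1) ≤ Real.exp (-L) := by
      calc ρ^(n+1) ≤ (Real.exp (-(2/(s+1))))^(n+1) := pow_le_pow_left₀ hρ0 hρexp _
        _ = Real.exp (-(((n:ℝ)+1) * (2/(s+1)))) := by
            rw [← Real.exp_nat_mul]; congr 1; push_cast; ring
        _ ≤ Real.exp (-L) := by
            rw [Real.exp_le_exp, neg_le_neg_iff, mul_div_assoc', le_div_iff₀ hsp]
            have hsL : (0:ℝ) ≤ (s-1) * L := mul_nonneg (by linarith) (by linarith)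
            nlinarith [hnge]
    have hexpL : Real.exp (-L) = δ/(2*κ) := by
      rw [hL, Real.exp_neg, Real.exp_log (by positivity), inv_div]
    calc |p.eval x - 1/x| ≤ 2 * ρ^(n+1) := herr
      _ ≤ 2 * (δ/(2*κ)) := by rw [← hexpL]; linarith [hpow]
      _ = δ/κ := by field_simp
end
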